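/- arXiv:2303.15203 — 5 statements merged into one kernel-verified Lean document; each statement's English description precedes it below -/
import Mathlib

section
/- Let t be the Thue-Morse sequence and t_m its m-fold running sum mod 2. Then for all k ≥ 0 and n ≥ 0: t_{2^n}[k] ≡ t_1[⌊k/2^n⌋] + (⌊k/2^n⌋ + 1)·t[k mod 2^n] (mod 2). -/
/-- The Thue–Morse sequence: parity of the number of 1s in the binary representation. -/
def t (k : ℕ) : ℕ := (Nat.digits 2 k).sum % 2

/-- `ts m` is the m-fold iterated running sum (mod 2) of the Thue–Morse sequence. -/
def ts : ℕ → ℕ → ℕ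
  | 0, k => t k
  | m + 1, k => (∑ j ∈ Finset.range (k + 1), ts m j) % 2

/-!
Write `S` for the running sum. In characteristic 2 the middle terms of
`S (S a) (k + 2) = S (S a) k + 2 • S a (k + 1) + a (k + 2)` cancel, so
`S (S a) (2q + e) = ∑_{j ≤ q} a (2j + e)`: a double running sum is a running sum along a residue
class mod 2. Iterating, `S^[2^n] a (2^n q + r) = ∑_{i ≤ q} a (2^n i + r)` for `r < 2^n`. For the
Thue–Morse sequence `t (2^n i + r) = t i + t r`, since the binary digits of `r` and `i` occupy
disjoint positions, and the sum splits as `S t q + (q + 1) t r`.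
-/

open Finset

theorem Nat.digits_sum_add_base_pow_mul {b n r : ℕ} (hb : 1 < b) (hr : r < b ^ n) (m : ℕ) :
    (b.digits (r + b ^ n * m)).sum = (b.digits r).sum + (b.digits m).sum := by
  rcases Nat.eq_zero_or_pos m with rfl | hm
  · simp
  have hlen : (b.digits r).length ≤ n := (Nat.digits_length_le_iff hb r).2 hr
  rw [← Nat.add_sub_cancel' hlen, ← Nat.digits_append_zeroes_append_digits hb hm]
  simp

theorem natCast_t_two_pow_mul_add {n r : ℕ} (hr : r < 2 ^ n) (i : ℕ) :
    (t (2 ^ n * i + r) : ZMod 2) = t i + t r := by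
  simp only [t, ZMod.natCast_mod, add_comm (2 ^ n * i) r,
    Nat.digits_sum_add_base_pow_mul one_lt_two hr, Nat.cast_add, add_comm]

def runningSum {M : Type*} [AddCommMonoid M] (a : ℕ → M) (k : ℕ) : M :=
  ∑ j ∈ range (k + 1), a j

theorem runningSum_succ {M : Type*} [AddCommMonoid M] (a : ℕ → M) (k : ℕ) :
    runningSum a (k + 1) = runningSum a k + a (k + 1) :=
  sum_range_succ _ _

theorem natCast_ts (m k : ℕ) :
    (ts m k : ZMod 2) = runningSum^[m] (fun j ↦ (t j : ZMod 2)) k := by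
  induction m generalizing k with
  | zero => rfl
  | succ m ih =>
    rw [Function.iterate_succ_apply', ts, ZMod.natCast_mod, Nat.cast_sum]
    simp only [ih, runningSum]

section CharTwo

variable {R : Type*} [Semiring R] [CharP R 2]

theorem runningSum_runningSum_add_two (a : ℕ → R) (k : ℕ) :
    runningSum (runningSum a) (k + 2) = runningSum (runningSum a) k + a (k + 2) := by
  rw [runningSum_succ _ (k + 1), runningSum_succ _ k, runningSum_succ a (k + 1), add_assoc,
    ← add_assoc (runningSum a (k + 1)), CharTwo.add_self_eq_zero, zero_add]

theorem runningSum_runningSum_two_mul_add {e : ℕ} (he : e < 2) (a : ℕ → R) (q : ℕ) :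
    runningSum (runningSum a) (2 * q + e) = runningSum (fun j ↦ a (2 * j + e)) q := by
  induction q with
  | zero =>
    interval_cases e <;> simp [runningSum, sum_range_succ, ← add_assoc, CharTwo.add_self_eq_zero]
  | succ q ih =>
    rw [show 2 * (q + 1) + e = 2 * q + e + 2 by ring, runningSum_runningSum_add_two, ih,
      runningSum_succ _ q]
    ring_nf

theorem iterate_runningSum_two_pow_mul_add (n : ℕ) {r : ℕ} (hr : r < 2 ^ n) (a : ℕ → R) (q : ℕ) :
    runningSum^[2 ^ n] a (2 ^ n * q + r) = runningSum (fun i ↦ a (2 ^ n * i + r)) q := by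
  induction n generalizing r a q with
  | zero =>
    obtain rfl : r = 0 := by simpa using hr
    simp
  | succ n ih =>
    obtain ⟨e, r', he, hr', rfl⟩ : ∃ e r', e < 2 ∧ r' < 2 ^ n ∧ r = 2 ^ n * e + r' :=
      ⟨r / 2 ^ n, r % 2 ^ n, by rw [pow_succ] at hr; exact Nat.div_lt_of_lt_mul hr,
        Nat.mod_lt _ (by positivity), (Nat.div_add_mod r _).symm⟩
    have hinner : ∀ i, runningSum^[2 ^ n] a (2 ^ n * i + r') =
        runningSum (fun j ↦ a (2 ^ n * j + r')) i := ih hr' a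
    calc runningSum^[2 ^ (n + 1)] a (2 ^ (n + 1) * q + (2 ^ n * e + r'))
        = runningSum^[2 ^ n] (runningSum^[2 ^ n] a) (2 ^ n * (2 * q + e) + r') := by
          rw [pow_succ, Function.iterate_mul, Function.iterate_succ_apply',
            Function.iterate_one]
          ring_nf
      _ = runningSum (runningSum (fun j ↦ a (2 ^ n * j + r'))) (2 * q + e) := by
          rw [ih hr']
          simp only [hinner]
      _ = runningSum (fun i ↦ a (2 ^ (n + 1) * i + (2 ^ n * e + r'))) q := by
          rw [runningSum_runningSum_two_mul_add he]
          congr 1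
          ext j
          congr 1
          ring

end CharTwo

theorem tm_pow2sum (n k : ℕ) :
    ts (2 ^ n) k ≡ ts 1 (k / 2 ^ n) + (k / 2 ^ n + 1) * t (k % 2 ^ n) [MOD 2] := by
  rw [← ZMod.natCast_eq_natCast_iff]
  push_cast
  set q := k / 2 ^ n
  set r := k % 2 ^ n
  have hr : r < 2 ^ n := Nat.mod_lt _ (by positivity)
  have hk : k = 2 ^ n * q + r := (Nat.div_add_mod k _).symm
  simp only [natCast_ts]
  rw [hk, iterate_runningSum_two_pow_mul_add n hr]
  simp only [runningSum, natCast_t_two_pow_mul_add hr, sum_add_distrib, sum_const, card_range,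
    Function.iterate_one, nsmul_eq_mul]
  push_cast
  ring
end

section
/- Let t be the Thue-Morse sequence, t[k] = parity of the number of 1s in the binary representation of k, and let t_1 be its running sum mod 2. If for nonnegative integers k, k' we write q = ⌊k/2^{n+2}⌋, r = k mod 2^{n+2}, q' = ⌊k'/2^{n+2}⌋, r' = k' mod 2^{n+2}, then t[q] = t[q'] and r = r' imply that for every binary string z, appending z to the binary representations of k and k' yields numbers K, K' with t_{2^n}[K] = t_{2^n}[K']. -/
/-- The value of a binary string (msd-first). -/
def val (z : List Bool) : ℕ := z.foldl (fun a b => 2 * a + (if b then 1 else 0)) 0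

/-!
Taking running sums mod 2 twice and then restricting to one residue class mod 2 is the same as
restricting first and taking running sums once. Hence `2 ^ n` running sums of `f`, evaluated at
`k`, give the parity of the sum of `f` over `k % 2 ^ n, k % 2 ^ n + 2 ^ n, …, k`. For `f = t`
each summand splits as `t i + t (k % 2 ^ n)`, and the parity of `∑_{i ≤ K} t i` depends only on
`K % 4` and `t (K / 4)`, because `t` takes the values `0, 1` on each pair `2j, 2j+1`. For
`K = k / 2 ^ n` these are read off from `k % 2 ^ (n + 2)` and `t (k / 2 ^ (n + 2))`. Appending a
binary string preserves both, since `t` is additive mod 2 under concatenation of binary expansions.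
-/

section

open Finset

lemma t_lt_two (k : ℕ) : t k < 2 := Nat.mod_lt _ two_pos

lemma t_two_mul_add {b : ℕ} (j : ℕ) (hb : b < 2) : t (2 * j + b) = (t j + b) % 2 := by
  rcases Nat.eq_zero_or_pos (2 * j + b) with h | h
  · obtain ⟨rfl, rfl⟩ : j = 0 ∧ b = 0 := by omega
    simp [t]
  · unfold t
    rw [Nat.digits_def' one_lt_two h, List.sum_cons,
      show (2 * j + b) % 2 = b by omega, show (2 * j + b) / 2 = j by omega]
    omega

lemma t_two_mul (j : ℕ) : t (2 * j) = t j := by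
  simpa [Nat.mod_eq_of_lt (t_lt_two j)] using t_two_mul_add j two_pos

lemma t_mul_two_pow_add (i : ℕ) {m ρ : ℕ} (hρ : ρ < 2 ^ m) :
    t (i * 2 ^ m + ρ) = (t i + t ρ) % 2 := by
  induction m generalizing ρ with
  | zero =>
    obtain rfl : ρ = 0 := by simpa using hρ
    simp [t]
  | succ m ih =>
    have hsplit : i * 2 ^ (m + 1) + ρ = 2 * (i * 2 ^ m + ρ / 2) + ρ % 2 := by
      rw [pow_succ, ← mul_assoc]; omega
    have hρ2 : ρ / 2 < 2 ^ m := by rw [pow_succ] at hρ; omega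
    have hρt : t ρ = (t (ρ / 2) + ρ % 2) % 2 := by
      conv_lhs => rw [← Nat.div_add_mod ρ 2]
      exact t_two_mul_add _ (Nat.mod_lt _ two_pos)
    rw [hsplit, t_two_mul_add _ (Nat.mod_lt _ two_pos), ih hρ2, hρt]
    omega

lemma t_eq_div_add_mod (m k : ℕ) : t k = (t (k / 2 ^ m) + t (k % 2 ^ m)) % 2 := by
  conv_lhs => rw [← Nat.div_add_mod k (2 ^ m), mul_comm]
  exact t_mul_two_pow_add _ (Nat.mod_lt _ (by positivity))

lemma t_div_two_pow_eq_iff {m a b : ℕ} (h : a % 2 ^ m = b % 2 ^ m) :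
    t (a / 2 ^ m) = t (b / 2 ^ m) ↔ t a = t b := by
  rw [t_eq_div_add_mod m a, t_eq_div_add_mod m b, h]
  have := t_lt_two (a / 2 ^ m); have := t_lt_two (b / 2 ^ m)
  omega

lemma sum_range_two_mul_t (M : ℕ) : ∑ i ∈ range (2 * M), t i = M := by
  induction M with
  | zero => simp
  | succ M ih =>
    rw [mul_add, mul_one, sum_range_succ, sum_range_succ, ih, t_two_mul, t_two_mul_add M one_lt_two]
    have := t_lt_two M
    omega

lemma sum_range_t (N : ℕ) : ∑ i ∈ range N, t i = N / 2 + N % 2 * t (N / 2) := by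
  rcases Nat.even_or_odd' N with ⟨M, rfl | rfl⟩
  · simp [sum_range_two_mul_t]
  · rw [sum_range_succ, sum_range_two_mul_t, t_two_mul, show (2 * M + 1) / 2 = M by omega,
      show (2 * M + 1) % 2 = 1 by omega, one_mul]

lemma sum_range_succ_t_modEq {K K' : ℕ} (h4 : K % 4 = K' % 4) (ht : t (K / 4) = t (K' / 4)) :
    ∑ i ∈ range (K + 1), t i ≡ ∑ i ∈ range (K' + 1), t i [MOD 2] := by
  have hsucc : ∀ L, (L + 1) % 2 * t ((L + 1) / 2) = (L + 1) % 2 * t (L / 2) := fun L => by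
    by_cases h : L % 2 = 0
    · rw [show (L + 1) / 2 = L / 2 by omega]
    · rw [show (L + 1) % 2 = 0 by omega, zero_mul, zero_mul]
  have hhalf : ∀ L, t (L / 2) = (t (L / 4) + L % 4 / 2) % 2 := fun L => by
    rw [show L / 2 = 2 * (L / 4) + L % 4 / 2 by omega]
    exact t_two_mul_add _ (by omega)
  unfold Nat.ModEq
  rw [sum_range_t, sum_range_t, hsucc, hsucc, hhalf, hhalf, ht, h4,
    show (K + 1) % 2 = (K' + 1) % 2 by omega]
  omega

def runningParity (f : ℕ → ℕ) (k : ℕ) : ℕ := (∑ j ∈ range (k + 1), f j) % 2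

lemma ts_eq_runningParity_iterate (m : ℕ) : ts m = runningParity^[m] t := by
  induction m with
  | zero => funext k; rfl
  | succ m ih =>
    funext k
    rw [Function.iterate_succ_apply', ← ih]
    rfl

lemma runningParity_runningParity_two_mul_add (f : ℕ → ℕ) (i : ℕ) {ρ : ℕ}
    (hρ : ρ < 2) :
    runningParity (runningParity f) (2 * i + ρ) = runningParity (fun a => f (2 * a + ρ)) i := by
  unfold runningParity
  beta_reduce
  rw [← sum_nat_mod]
  induction i with
  | zero =>
    interval_cases ρ
    · simp
    · simp [sum_range_succ]
      omega
  | succ i ih =>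
    -- the two new outer summands are `S` and `S + f (2 * (i + 1) + ρ)` for one partial sum `S`
    rw [show 2 * (i + 1) + ρ + 1 = 2 * i + ρ + 1 + 1 + 1 by ring, sum_range_succ, sum_range_succ,
      sum_range_succ _ (2 * i + ρ + 1 + 1), sum_range_succ (fun a => f (2 * a + ρ)),
      show 2 * (i + 1) + ρ = 2 * i + ρ + 1 + 1 by ring]
    omega

lemma runningParity_iterate_two_mul_apply (m : ℕ) (f : ℕ → ℕ) (i : ℕ) {ρ : ℕ}
    (hρ : ρ < 2) :
    runningParity^[2 * m] f (2 * i + ρ) = runningParity^[m] (fun a => f (2 * a + ρ)) i := by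
  induction m generalizing f with
  | zero => rfl
  | succ m ih =>
    rw [mul_add, mul_one, Function.iterate_add_apply, ih, Function.iterate_succ_apply]
    exact congrArg (fun g => runningParity^[m] g i)
      (funext fun a => runningParity_runningParity_two_mul_add f a hρ)

lemma runningParity_iterate_two_pow_apply (n : ℕ) (f : ℕ → ℕ) (k : ℕ) :
    runningParity^[2 ^ n] f k =
      (∑ i ∈ range (k / 2 ^ n + 1), f (i * 2 ^ n + k % 2 ^ n)) % 2 := by
  induction n generalizing f k with
  | zero => simp [runningParity, Nat.mod_one]
  | succ n ih =>
    have hk : k = 2 * (k / 2) + k % 2 := (Nat.div_add_mod k 2).symm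
    rw [pow_succ', hk, runningParity_iterate_two_mul_apply _ _ _ (Nat.mod_lt _ two_pos), ih,
      ← hk, Nat.div_div_eq_div_mul, Nat.mod_mul]
    congr 1
    refine sum_congr rfl fun i _ => ?_
    congr 1
    ring

lemma ts_two_pow_apply (n k : ℕ) :
    ts (2 ^ n) k =
      (∑ i ∈ range (k / 2 ^ n + 1), t i + (k / 2 ^ n + 1) * t (k % 2 ^ n)) % 2 := by
  rw [ts_eq_runningParity_iterate, runningParity_iterate_two_pow_apply,
    sum_congr rfl fun i _ => t_mul_two_pow_add i (Nat.mod_lt k (by positivity)),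
    ← sum_nat_mod, sum_add_distrib, sum_const, card_range, smul_eq_mul]

lemma ts_two_pow_congr {n a b : ℕ} (hq : t (a / 2 ^ (n + 2)) = t (b / 2 ^ (n + 2)))
    (hr : a % 2 ^ (n + 2) = b % 2 ^ (n + 2)) : ts (2 ^ n) a = ts (2 ^ n) b := by
  have hpow : 2 ^ (n + 2) = 2 ^ n * 4 := by ring
  have hρ : a % 2 ^ n = b % 2 ^ n := by
    have hdvd : 2 ^ n ∣ 2 ^ (n + 2) := pow_dvd_pow 2 (by omega)
    rw [← Nat.mod_mod_of_dvd a hdvd, ← Nat.mod_mod_of_dvd b hdvd, hr]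
  have h4 : a / 2 ^ n % 4 = b / 2 ^ n % 4 := by
    rw [← Nat.mod_mul_right_div_self, ← Nat.mod_mul_right_div_self, ← hpow, hr]
  have hsum := sum_range_succ_t_modEq h4
    (by rwa [Nat.div_div_eq_div_mul, Nat.div_div_eq_div_mul, ← hpow])
  have hcoef : a / 2 ^ n + 1 ≡ b / 2 ^ n + 1 [MOD 2] := by unfold Nat.ModEq; omega
  rw [ts_two_pow_apply, ts_two_pow_apply, hρ]
  exact hsum.add (hcoef.mul_right _)

end

lemma foldl_binary_lt (z : List Bool) (a : ℕ) :
    z.foldl (fun a b => 2 * a + (if b then 1 else 0)) a < (a + 1) * 2 ^ z.length := by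
  induction z generalizing a with
  | nil => simp
  | cons b z ih =>
    refine (ih _).trans_le ?_
    rw [List.length_cons, pow_succ]
    dsimp only
    split_ifs <;> nlinarith [Nat.two_pow_pos z.length]

lemma val_lt_two_pow (z : List Bool) : val z < 2 ^ z.length := by
  simpa [val] using foldl_binary_lt z 0

theorem myhill_nerode_only_if (n k k' : ℕ)
    (hq : t (k / 2 ^ (n + 2)) = t (k' / 2 ^ (n + 2)))
    (hr : k % 2 ^ (n + 2) = k' % 2 ^ (n + 2)) (z : List Bool) :
    ts (2 ^ n) (k * 2 ^ z.length + val z) = ts (2 ^ n) (k' * 2 ^ z.length + val z) := by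
  have hr' : (k * 2 ^ z.length + val z) % 2 ^ (n + 2) = (k' * 2 ^ z.length + val z) % 2 ^ (n + 2) :=
    ((Nat.ModEq.mul_right _ hr).add_right _ : _)
  apply ts_two_pow_congr _ hr'
  rw [t_div_two_pow_eq_iff hr', t_mul_two_pow_add _ (val_lt_two_pow z),
    t_mul_two_pow_add _ (val_lt_two_pow z), (t_div_two_pow_eq_iff hr).1 hq]
end

section
/- Let T be a 1-uniform deterministic finite-state transducer with state set V and input alphabet Δ, and let x be a k-automatic sequence over Δ (k ≥ 2). Then the transduced sequence T(x), whose n-th term is σ(φ*(v₀, x₀⋯x_{n−1}), x_n), is k-automatic. -/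
/-- A sequence `x` over `Γ` is `k`-automatic if some DFAO, reading the msd-first
base-`k` representation of `n`, outputs `x n`. -/
def IsKAutomatic (k : ℕ) {Γ : Type} (x : ℕ → Γ) : Prop :=
  ∃ (Q : Type) (_ : Fintype Q) (δ : Q → ℕ → Q) (q0 : Q) (out : Q → Γ),
    ∀ n : ℕ, x n = out (((Nat.digits k n).reverse).foldl δ q0)

/-!
After reading `x₀ ⋯ xₙ₋₁` the transducer is in state `(g 0 * ⋯ * g (n - 1)) v₀`, where
`g n = φ(·, xₙ)` is an automatic sequence in the finite monoid `(Function.End V)ᵐᵒᵖ`; so it suffices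
that prefix products of an automatic sequence in a finite monoid are automatic.

Fix a DFAO for `g` that ignores leading zeros. The product of the block `[a kⁱ, (a + 1) kⁱ)` of `g`
then depends only on the state `q` reached on the digits of `a`, and as a function `ψᵢ` of `q` it
satisfies `ψᵢ₊₁ q = ∏_{e < k} ψᵢ (δ q e)`. Appending a digit `d` to `a` turns the prefix product of
length `a kⁱ⁺¹` into that of length `(a k + d) kⁱ` by multiplying with `∏_{e < d} ψᵢ (δ q e)`.
Hence the new DFAO stores, next to `q`, the functional `G : (Q → M) → M` sending `ψᵢ` to the prefix
product of length `a kⁱ` simultaneously for all levels `i`; there are only finitely many such `G`.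
-/

theorem List.foldl_prodMk {α β γ : Type*} (f : α → γ → α) (g : β → γ → β) (l : List γ)
    (a : α) (b : β) :
    l.foldl (fun p c => (f p.1 c, g p.2 c)) (a, b) = (l.foldl f a, l.foldl g b) := by
  induction l generalizing a b with
  | nil => rfl
  | cons c l ih => exact ih _ _

theorem List.foldl_eq_unop_prod_map {α V : Type*} (φ : V → α → V) (l : List α) (v : V) :
    l.foldl φ v =
      (l.map fun a => (MulOpposite.op fun w => φ w a : (Function.End V)ᵐᵒᵖ)).prod.unop v := by
  induction l generalizing v with
  | nil => rfl
  | cons a l ih => exact ih (φ v a)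

theorem Nat.ofDigits_reverse_append_singleton (b d : ℕ) (u : List ℕ) :
    Nat.ofDigits b (u ++ [d]).reverse = b * Nat.ofDigits b u.reverse + d := by
  simp only [List.reverse_append, List.reverse_singleton, List.singleton_append,
    Nat.ofDigits_cons]
  ring

/-- The flag records whether a nonzero digit has been read. -/
def skipLeadingZeros {Q : Type*} (δ : Q → ℕ → Q) (p : Q × Bool) (d : ℕ) : Q × Bool :=
  if p.2 || d ≠ 0 then (δ p.1 d, true) else p

theorem foldl_skipLeadingZeros_true {Q : Type*} (δ : Q → ℕ → Q) (u : List ℕ) (q : Q) :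
    u.foldl (skipLeadingZeros δ) (q, true) = (u.foldl δ q, true) := by
  induction u generalizing q with
  | nil => rfl
  | cons d u ih => exact ih _

theorem foldl_skipLeadingZeros_false {Q : Type*} {k : ℕ} (hk : 2 ≤ k) (δ : Q → ℕ → Q) (q0 : Q)
    (u : List ℕ) (hu : ∀ d ∈ u, d < k) :
    (u.foldl (skipLeadingZeros δ) (q0, false)).1 =
      ((Nat.digits k (Nat.ofDigits k u.reverse)).reverse).foldl δ q0 := by
  induction u with
  | nil => simp
  | cons d u ih =>
    by_cases hd : d = 0
    · subst hd
      simpa [skipLeadingZeros, Nat.ofDigits_append] using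
        ih fun e he => hu e (List.mem_cons_of_mem _ he)
    · have hdigits : Nat.digits k (Nat.ofDigits k (d :: u).reverse) = (d :: u).reverse :=
        Nat.digits_ofDigits k hk _ (fun e he => hu e (List.mem_reverse.mp he))
          (fun _ => by simpa using hd)
      rw [hdigits, List.reverse_reverse, List.foldl_cons, List.foldl_cons]
      simp [skipLeadingZeros, hd, foldl_skipLeadingZeros_true]

namespace IsKAutomatic

variable {k : ℕ} {Γ Γ' : Type}

theorem map {x : ℕ → Γ} (hx : IsKAutomatic k x) (f : Γ → Γ') :
    IsKAutomatic k (fun n => f (x n)) := by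
  obtain ⟨Q, _, δ, q0, out, hout⟩ := hx
  exact ⟨Q, ‹_›, δ, q0, f ∘ out, fun n => congrArg f (hout n)⟩

theorem prodMk {x : ℕ → Γ} {y : ℕ → Γ'} (hx : IsKAutomatic k x) (hy : IsKAutomatic k y) :
    IsKAutomatic k (fun n => (x n, y n)) := by
  obtain ⟨Q, _, δ, q0, out, hout⟩ := hx
  obtain ⟨Q', _, δ', q0', out', hout'⟩ := hy
  refine ⟨Q × Q', inferInstance, fun p d => (δ p.1 d, δ' p.2 d), (q0, q0'),
    fun p => (out p.1, out' p.2), fun n => ?_⟩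
  rw [List.foldl_prodMk]
  exact Prod.ext (hout n) (hout' n)

theorem exists_dfao_ofDigits (hk : 2 ≤ k) {x : ℕ → Γ} (hx : IsKAutomatic k x) :
    ∃ (Q : Type) (_ : Fintype Q) (δ : Q → ℕ → Q) (q0 : Q) (out : Q → Γ),
      ∀ u : List ℕ, (∀ d ∈ u, d < k) → x (Nat.ofDigits k u.reverse) = out (u.foldl δ q0) := by
  obtain ⟨Q, _, δ, q0, out, hout⟩ := hx
  refine ⟨Q × Bool, inferInstance, skipLeadingZeros δ, (q0, false), fun p => out p.1,
    fun u hu => ?_⟩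
  exact (hout _).trans (congrArg out (foldl_skipLeadingZeros_false hk δ q0 u hu).symm)

end IsKAutomatic

section PrefixProd

variable {M : Type} [Monoid M] (g : ℕ → M)

def blockProd (a m : ℕ) : M := ((List.range' a m).map g).prod

theorem blockProd_add (a m n : ℕ) :
    blockProd g a (m + n) = blockProd g a m * blockProd g (a + m) n := by
  simp only [blockProd, ← List.range'_append, one_mul, List.map_append, List.prod_append]

theorem blockProd_one (a : ℕ) : blockProd g a 1 = g a := by
  simp [blockProd]

theorem prod_map_range_blockProd (a t d : ℕ) :
    ((List.range d).map fun e => blockProd g (a + e * t) t).prod = blockProd g a (d * t) := by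
  induction d with
  | zero => simp [blockProd]
  | succ d ih => rw [List.prod_range_succ, ih, Nat.succ_mul, blockProd_add]

variable {Q : Type} (k : ℕ) (δ : Q → ℕ → Q) (q0 : Q)

def childProd (ψ : Q → M) (q : Q) (d : ℕ) : M :=
  ((List.range d).map fun e => ψ (δ q e)).prod

def IsBlockProdAt (i : ℕ) (ψ : Q → M) : Prop :=
  ∀ u : List ℕ, (∀ d ∈ u, d < k) →
    ψ (u.foldl δ q0) = blockProd g (Nat.ofDigits k u.reverse * k ^ i) (k ^ i)

variable {g k δ q0}

theorem IsBlockProdAt.childProd_foldl {i : ℕ} {ψ : Q → M} (hψ : IsBlockProdAt g k δ q0 i ψ)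
    {u : List ℕ} (hu : ∀ d ∈ u, d < k) {d : ℕ} (hd : d ≤ k) :
    childProd δ ψ (u.foldl δ q0) d =
      blockProd g (Nat.ofDigits k u.reverse * k ^ (i + 1)) (d * k ^ i) := by
  rw [childProd, ← prod_map_range_blockProd]
  refine congrArg List.prod (List.map_congr_left fun e he => ?_)
  have he : e < k := (List.mem_range.mp he).trans_le hd
  have hue : ∀ c ∈ u ++ [e], c < k := by
    simpa [or_imp, forall_and] using And.intro hu he
  have hstep : δ (u.foldl δ q0) e = (u ++ [e]).foldl δ q0 := by simp
  rw [hstep, hψ (u ++ [e]) hue, Nat.ofDigits_reverse_append_singleton]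
  congr 1
  ring

theorem IsBlockProdAt.childProd {i : ℕ} {ψ : Q → M} (hψ : IsBlockProdAt g k δ q0 i ψ) :
    IsBlockProdAt g k δ q0 (i + 1) (fun q => childProd δ ψ q k) := fun u hu =>
  (hψ.childProd_foldl hu le_rfl).trans (by rw [pow_succ' k i])

variable (k δ) in
def prefixProdStep (s : Q × ((Q → M) → M)) (d : ℕ) : Q × ((Q → M) → M) :=
  (δ s.1 d, fun ψ => s.2 (fun q => childProd δ ψ q k) * childProd δ ψ s.1 d)

theorem foldl_prefixProdStep_fst (u : List ℕ) (s : Q × ((Q → M) → M)) :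
    (u.foldl (prefixProdStep k δ) s).1 = u.foldl δ s.1 := by
  induction u generalizing s with
  | nil => rfl
  | cons d u ih => exact ih _

theorem foldl_prefixProdStep_snd {u : List ℕ} (hu : ∀ d ∈ u, d < k) {i : ℕ} {ψ : Q → M}
    (hψ : IsBlockProdAt g k δ q0 i ψ) :
    (u.foldl (prefixProdStep k δ) (q0, fun _ => 1)).2 ψ =
      blockProd g 0 (Nat.ofDigits k u.reverse * k ^ i) := by
  induction u using List.reverseRecOn generalizing i ψ with
  | nil => simp [blockProd]
  | append_singleton u d ih =>
    have hu' : ∀ c ∈ u, c < k := fun c hc => hu c (List.mem_append_left _ hc)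
    have hd : d < k := hu d (by simp)
    rw [List.foldl_append, List.foldl_cons, List.foldl_nil]
    simp only [prefixProdStep]
    rw [foldl_prefixProdStep_fst, ih hu' hψ.childProd, hψ.childProd_foldl hu' hd.le,
      Nat.ofDigits_reverse_append_singleton, add_mul, mul_comm k, mul_assoc, ← pow_succ',
      blockProd_add, zero_add]

theorem IsKAutomatic.prefixProd [Finite M] (hk : 2 ≤ k) (hg : IsKAutomatic k g) :
    IsKAutomatic k (fun n => ((List.range n).map g).prod) := by
  classical
  have : Fintype M := Fintype.ofFinite M
  obtain ⟨Q, _, δ, q0, out, hout⟩ := hg.exists_dfao_ofDigits hk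
  refine ⟨Q × ((Q → M) → M), inferInstance, prefixProdStep k δ, (q0, fun _ => 1),
    fun s => s.2 out, fun n => ?_⟩
  have hout0 : IsBlockProdAt g k δ q0 0 out := fun u hu => by
    rw [pow_zero, mul_one, blockProd_one, hout u hu]
  have hu : ∀ d ∈ (Nat.digits k n).reverse, d < k := fun d hd =>
    Nat.digits_lt_base hk (List.mem_reverse.mp hd)
  dsimp only
  rw [foldl_prefixProdStep_snd hu hout0, List.reverse_reverse, Nat.ofDigits_digits, pow_zero,
    mul_one, blockProd, List.range_eq_range']

end PrefixProd

/-- Dekking's theorem: the transduction of a k-automatic sequence by a 1-uniform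
deterministic finite-state transducer is k-automatic. -/
theorem transduction_automatic {Δ Γ V : Type} [Fintype V]
    (φ : V → Δ → V) (v0 : V) (σ : V → Δ → Γ)
    (k : ℕ) (hk : 2 ≤ k) (x : ℕ → Δ) (hx : IsKAutomatic k x) :
    IsKAutomatic k (fun n => σ ((List.ofFn (fun i : Fin n => x i)).foldl φ v0) (x n)) := by
  have : Finite (Function.End V)ᵐᵒᵖ := Finite.of_equiv (V → V) MulOpposite.opEquiv
  let step (a : Δ) : (Function.End V)ᵐᵒᵖ := MulOpposite.op fun w => φ w a
  have hprefix := ((hx.map step).prefixProd hk).prodMk hx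
  convert hprefix.map fun p => σ (p.1.unop v0) p.2 using 3 with n
  have hofFn : List.ofFn (fun i : Fin n => x i) = (List.range n).map x := by
    apply List.ext_getElem <;> simp
  rw [hofFn, List.foldl_eq_unop_prod_map, List.map_map]
  rfl
end

section
/- Let Q, V be finite sets, h: Q* → Q* a k-uniform morphism, λ: Q* → Δ* a coding, and φ: V×Δ → V a transition function; for y ∈ Δ* define f_y: V → V by f_y(v) = φ*(v, y). Then there exist integers p ≥ 1 and r ≥ 0 such that for ALL words w ∈ Q* and all i ≥ r, f_{λ(h^i(w))} = f_{λ(h^{p+i}(w))}; i.e., the sequences (f_{λ(h^n(w))})_{n≥0} are ultimately periodic with a common period and preperiod independent of w. -/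
theorem ultimately_periodic_transition_maps
    {Q V Δ : Type} [Fintype Q] [Fintype V]
    (k : ℕ) (h : Q → List Q) (hk : ∀ q, (h q).length = k)
    (lam : Q → Δ) (φ : V → Δ → V) :
    ∃ p : ℕ, 1 ≤ p ∧ ∃ r : ℕ, ∀ (w : List Q) (i : ℕ), r ≤ i →
      (fun v : V => (((fun u : List Q => u.flatMap h)^[i] w).map lam).foldl φ v) =
      (fun v : V => (((fun u : List Q => u.flatMap h)^[p + i] w).map lam).foldl φ v) := by
  classical
  set F : List Q → List Q := fun u : List Q => u.flatMap h with hF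
  set g : ℕ → Q → V → V := fun i q v => ((F^[i] [q]).map lam).foldl φ v with hg
  have hFapp : ∀ i (a b : List Q), F^[i] (a ++ b) = F^[i] a ++ F^[i] b := by
    intro i
    induction i with
    | zero => intro a b; simp
    | succ n ih =>
      intro a b
      rw [Function.iterate_succ_apply, Function.iterate_succ_apply,
        Function.iterate_succ_apply]
      rw [show F (a ++ b) = F a ++ F b by simp [hF], ih]
  have lemA : ∀ (w : List Q) i (v : V),
      ((F^[i] w).map lam).foldl φ v = w.foldl (fun v q => g i q v) v := by
    intro w i
    induction w with
    | nil =>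
      intro v
      have hFnil : F^[i] ([] : List Q) = [] := by
        induction i with
        | zero => rfl
        | succ n ih => rw [Function.iterate_succ_apply, show F ([] : List Q) = [] from rfl, ih]
      simp [hFnil]
    | cons q w ih =>
      intro v
      rw [show (q :: w) = [q] ++ w from rfl, hFapp, List.map_append,
        List.foldl_append]
      simp only [List.foldl_append, List.foldl_cons, List.foldl_nil]
      rw [ih]
  set Φ : (Q → V → V) → Q → V → V :=
    fun G q v => (h q).foldl (fun v q' => G q' v) v with hΦ
  have hgstep : ∀ i, g (i + 1) = Φ (g i) := by
    intro i
    funext q v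
    have h1 : F^[i + 1] [q] = F^[i] (h q) := by
      rw [Function.iterate_succ_apply]
      congr 1
      simp [hF]
    simp only [hg, h1, hΦ]
    exact lemA (h q) i v
  have hgiter : ∀ i, g i = Φ^[i] (g 0) := by
    intro i
    induction i with
    | zero => rfl
    | succ n ih => rw [hgstep, ih]; exact (Function.iterate_succ_apply' Φ n (g 0)).symm
  obtain ⟨m, n, hmn, heq⟩ :
      ∃ m n : ℕ, m ≠ n ∧ Φ^[m] (g 0) = Φ^[n] (g 0) :=
    Finite.exists_ne_map_eq_of_infinite (fun i : ℕ => Φ^[i] (g 0))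
  -- wlog m < n
  obtain ⟨m, n, hmn, heq⟩ : ∃ m n : ℕ, m < n ∧ Φ^[m] (g 0) = Φ^[n] (g 0) := by
    rcases lt_or_gt_of_ne hmn with hlt | hgt
    · exact ⟨m, n, hlt, heq⟩
    · exact ⟨n, m, hgt, heq.symm⟩
  refine ⟨n - m, by omega, m, ?_⟩
  have key : ∀ i, m ≤ i → g i = g ((n - m) + i) := by
    intro i hi
    obtain ⟨t, rfl⟩ := Nat.exists_eq_add_of_le hi
    rw [hgiter (m + t), hgiter ((n - m) + (m + t)),
      show m + t = t + m from by omega,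
      show n - m + (t + m) = t + n from by omega,
      Function.iterate_add_apply, Function.iterate_add_apply, heq]
  intro w i hi
  funext v
  rw [lemA, lemA, key i hi]
end

section
/- Let f be the infinite Fibonacci word (fixed point of 0→01, 1→0 over {0,1}), and let s(n) be the second-least-significant digit of the Zeckendorf (Fibonacci) representation of n, with s'(n) = 1 − s(n). Then for all n ≥ 0, f[n+1] = (∑_{i=0}^{n} s'(i)) mod 2. -/
/-- The Fibonacci morphism 0 → 01, 1 → 0. -/
def fibMor (a : ℕ) : List ℕ := if a = 0 then [0, 1] else [0]

/-- The infinite Fibonacci word, as its n-th letter: obtained from iterating the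
morphism on the letter 0 (the iterates are prefixes of one another and the
(n+1)-st iterate has length > n). -/
def fibWord (n : ℕ) : ℕ := ((fun w => w.flatMap fibMor)^[n + 1] [0]).getD n 0

/-!
The finite Fibonacci words `fibIter k` satisfy `fibIter (k + 2) = fibIter (k + 1) ++ fibIter k`,
so `f[F_{k+3} + j] = f[j]` for `j < F_{k+2}`. On the Zeckendorf side, adding `F_{k+4}` to
`t < F_{k+3}` just adjoins a leading digit and keeps the second digit of `t`, so the running sum
`S m = ∑_{i<m} s'(i)` satisfies `S (F_{k+4} + j) = S F_{k+4} + S j` for `j ≤ F_{k+3}`, and the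
same splitting shows by induction that every `S F_{k+3}` is even. Thus `f[m]` and `S m % 2`
obey the same recursion `F_{k+4} + j ↦ j`, and they agree for `m < 3`.
-/

open Finset Nat

def fibSubst (w : List ℕ) : List ℕ := w.flatMap fibMor

def fibIter (k : ℕ) : List ℕ := fibSubst^[k] [0]

lemma fibIter_succ (k : ℕ) : fibIter (k + 1) = fibSubst (fibIter k) :=
  Function.iterate_succ_apply' _ _ _

lemma fibIter_add_two : ∀ k, fibIter (k + 2) = fibIter (k + 1) ++ fibIter k
  | 0 => rfl
  | k + 1 => by
    conv_lhs => rw [fibIter_succ (k + 2), fibIter_add_two k, fibSubst, List.flatMap_append,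
      ← fibSubst, ← fibSubst, ← fibIter_succ, ← fibIter_succ]

lemma length_fibIter : ∀ k, (fibIter k).length = fib (k + 2)
  | 0 => rfl
  | 1 => rfl
  | k + 2 => by
    rw [fibIter_add_two, List.length_append, length_fibIter (k + 1), length_fibIter k,
      fib_add_two (n := k + 2), add_comm]

lemma fibIter_prefix_succ : ∀ k, fibIter k <+: fibIter (k + 1)
  | 0 => ⟨[1], rfl⟩
  | k + 1 => by rw [fibIter_add_two]; exact List.prefix_append _ _

lemma fibIter_prefix_of_le {a b : ℕ} (h : a ≤ b) : fibIter a <+: fibIter b := by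
  induction b, h using Nat.le_induction with
  | base => exact List.prefix_refl _
  | succ b _ ih => exact ih.trans (fibIter_prefix_succ b)

lemma List.IsPrefix.getD_eq {α : Type*} {u v : List α} (h : u <+: v) {n : ℕ}
    (hn : n < u.length) (x : α) : u.getD n x = v.getD n x := by
  obtain ⟨t, rfl⟩ := h
  exact (List.getD_append u t x n hn).symm

lemma fibWord_eq_getD_fibIter {k n : ℕ} (hn : n < (fibIter k).length) :
    fibWord n = (fibIter k).getD n 0 := by
  have hn' : n < (fibIter (n + 1)).length := by
    rw [length_fibIter]
    exact (fib_add_two_strictMono.id_le (n + 1)).trans_lt' (lt_add_one n)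
  change (fibIter (n + 1)).getD n 0 = _
  rcases le_total k (n + 1) with hk | hk
  · rw [(fibIter_prefix_of_le hk).getD_eq hn]
  · rw [(fibIter_prefix_of_le hk).getD_eq hn']

lemma fibWord_fib_add {k j : ℕ} (hj : j < fib (k + 2)) :
    fibWord (fib (k + 3) + j) = fibWord j := by
  have hlt : fib (k + 3) + j < (fibIter (k + 2)).length := by
    rw [length_fibIter, fib_add_two (n := k + 2)]
    exact add_comm (fib (k + 3)) j ▸ Nat.add_lt_add_right hj _
  rw [fibWord_eq_getD_fibIter hlt, fibIter_add_two, ← length_fibIter (k + 1),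
    List.getD_append_right _ _ _ _ (le_add_right le_rfl), Nat.add_sub_cancel_left,
    fibWord_eq_getD_fibIter (k := k) (by rwa [length_fibIter])]

lemma exists_eq_fib_add {m : ℕ} (hm : 3 ≤ m) :
    ∃ k j, j < fib (k + 3) ∧ m = fib (k + 4) + j := by
  obtain ⟨k, hk⟩ : ∃ k, greatestFib m = k + 4 :=
    ⟨greatestFib m - 4, by have : 4 ≤ greatestFib m := le_greatestFib.mpr hm; omega⟩
  have hle := fib_greatestFib_le m
  have hlt := lt_fib_greatestFib_add_one m
  have hfib : fib (k + 4 + 1) = fib (k + 3) + fib (k + 4) := fib_add_two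
  rw [hk] at hle hlt
  exact ⟨k, m - fib (k + 4), by omega, by omega⟩

structure IsFibDigits (a : ℕ → ℕ) : Prop where
  le_one : ∀ i, a i ≤ 1
  not_one_one : ∀ i, ¬ (a i = 1 ∧ a (i + 1) = 1)

structure IsZeckendorfDigits (a : ℕ → ℕ) (m : ℕ) : Prop extends IsFibDigits a where
  sum_eq : m = ∑ i ∈ range (m + 1), a i * fib (i + 2)
  eq_zero : ∀ i, m + 1 ≤ i → a i = 0

namespace IsFibDigits

variable {a b : ℕ → ℕ}

lemma sum_lt_fib (ha : IsFibDigits a) (T : ℕ) :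
    ∑ i ∈ range T, a i * fib (i + 2) < fib (T + 2) := by
  induction T using Nat.twoStepInduction with
  | zero => simp
  | one =>
    have h3 : fib (1 + 2) = 2 := rfl
    have := ha.le_one 0
    simp only [sum_range_one, zero_add, fib_two, mul_one, h3]
    omega
  | more T ih ih1 =>
    rw [sum_range_succ] at ih1 ⊢
    rw [sum_range_succ]
    have hfib : fib (T + 2 + 2) = fib (T + 2) + fib (T + 1 + 2) := fib_add_two
    rcases Nat.le_one_iff_eq_zero_or_eq_one.mp (ha.le_one (T + 1)) with h | h
    · have : fib (T + 1 + 2) ≤ fib (T + 2 + 2) := fib_le_fib_succ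
      simp only [h, zero_mul, add_zero]
      omega
    · have hT : a T = 0 := by have := ha.not_one_one T; have := ha.le_one T; omega
      simp only [h, hT, zero_mul, one_mul, add_zero]
      omega

lemma eq_of_sum_eq (ha : IsFibDigits a) (hb : IsFibDigits b) {T : ℕ}
    (hsum : ∑ i ∈ range T, a i * fib (i + 2) = ∑ i ∈ range T, b i * fib (i + 2)) {i : ℕ}
    (hi : i < T) : a i = b i := by
  induction T generalizing i with
  | zero => simp at hi
  | succ T ih =>
    rw [sum_range_succ, sum_range_succ] at hsum
    have hta := ha.sum_lt_fib T
    have htb := hb.sum_lt_fib T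
    have htop : a T = b T := by
      rcases Nat.le_one_iff_eq_zero_or_eq_one.mp (ha.le_one T) with h | h <;>
      rcases Nat.le_one_iff_eq_zero_or_eq_one.mp (hb.le_one T) with h' | h' <;>
        simp only [h, h', zero_mul, one_mul, add_zero] at hsum ⊢ <;> omega
    rcases Nat.lt_succ_iff_lt_or_eq.mp hi with hi | rfl
    · exact ih (by rw [htop] at hsum; omega) hi
    · exact htop

end IsFibDigits

namespace IsZeckendorfDigits

variable {a b : ℕ → ℕ} {m : ℕ}

lemma sum_range_eq (h : IsZeckendorfDigits a m) {T : ℕ} (hT : m + 1 ≤ T) :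
    ∑ i ∈ range T, a i * fib (i + 2) = m := by
  rw [h.sum_eq]
  refine (sum_subset (range_subset_range.mpr hT) fun i _ hi => ?_).symm
  rw [h.eq_zero i (by simpa using hi), zero_mul]

lemma eq_zero_of_lt_fib (h : IsZeckendorfDigits a m) {i : ℕ} (hi : m < fib (i + 2)) :
    a i = 0 := by
  by_contra hne
  have him : i ∈ range (m + 1) := mem_range.mpr (not_le.mp fun hle => hne (h.eq_zero i hle))
  have hai : a i = 1 := by have := h.le_one i; omega
  refine absurd ?_ (not_le.mpr hi)
  calc fib (i + 2) = a i * fib (i + 2) := by rw [hai, one_mul]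
    _ ≤ ∑ j ∈ range (m + 1), a j * fib (j + 2) :=
      single_le_sum (f := fun j => a j * fib (j + 2)) (fun _ _ => Nat.zero_le _) him
    _ = m := h.sum_eq.symm

lemma unique (ha : IsZeckendorfDigits a m) (hb : IsZeckendorfDigits b m) : a = b := by
  funext i
  by_cases hi : i < m + 1
  · exact ha.eq_of_sum_eq hb.toIsFibDigits (ha.sum_eq.symm.trans hb.sum_eq) hi
  · rw [ha.eq_zero i (not_lt.mp hi), hb.eq_zero i (not_lt.mp hi)]

lemma update_fib_add {t k : ℕ} (h : IsZeckendorfDigits a t) (ht : t < fib (k + 1)) :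
    IsZeckendorfDigits (Function.update a k 1) (fib (k + 2) + t) := by
  have hlow : ∀ i, k ≤ i + 1 → a i = 0 := fun i hi =>
    h.eq_zero_of_lt_fib (ht.trans_le (fib_mono (by omega)))
  have hk : k < fib (k + 2) + t + 1 := by
    have := fib_add_two_strictMono.id_le k
    simp only [id] at this
    omega
  refine ⟨⟨fun i => ?_, fun i => ?_⟩, ?_, fun i hi => ?_⟩
  · rcases eq_or_ne i k with rfl | hik
    · simp
    · simpa [hik] using h.le_one i
  · rintro ⟨h1, h2⟩
    by_cases hik : i = k
    · subst hik
      rw [Function.update_of_ne (by omega), hlow _ (by omega)] at h2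
      exact zero_ne_one h2
    by_cases hik' : i + 1 = k
    · rw [Function.update_of_ne hik, hlow i hik'.ge] at h1
      exact zero_ne_one h1
    rw [Function.update_of_ne hik] at h1
    rw [Function.update_of_ne hik'] at h2
    exact h.not_one_one i ⟨h1, h2⟩
  · have hs := h.sum_range_eq (T := fib (k + 2) + t + 1) (by omega)
    rw [← add_sum_erase _ _ (mem_range.mpr hk), hlow k (by omega), zero_mul, zero_add] at hs
    rw [← add_sum_erase _ _ (mem_range.mpr hk), Function.update_self, one_mul]
    refine congrArg _ (hs.symm.trans (sum_congr rfl fun i hi => ?_))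
    rw [Function.update_of_ne (ne_of_mem_erase hi)]
  · rw [Function.update_of_ne (by omega), h.eq_zero i (by omega)]

end IsZeckendorfDigits

def runSum (d : ℕ → ℕ → ℕ) (m : ℕ) : ℕ := ∑ i ∈ range m, (1 - d i 1)

section SecondDigit

variable {d : ℕ → ℕ → ℕ}

lemma second_digit_fib_add (hd : ∀ m, IsZeckendorfDigits (d m) m) {k t : ℕ}
    (ht : t < fib (k + 3)) : d (fib (k + 4) + t) 1 = d t 1 := by
  rw [(hd _).unique ((hd t).update_fib_add (k := k + 2) ht), Function.update_of_ne (by omega)]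

lemma second_digit_two (hd : ∀ m, IsZeckendorfDigits (d m) m) : d 2 1 = 1 := by
  have h2 : IsZeckendorfDigits (Function.update (d 0) 1 1) 2 :=
    (hd 0).update_fib_add (k := 1) (by decide)
  rw [(hd 2).unique h2, Function.update_self]

lemma second_digit_of_lt_two (hd : ∀ m, IsZeckendorfDigits (d m) m) {m : ℕ} (hm : m < 2) :
    d m 1 = 0 :=
  (hd m).eq_zero_of_lt_fib hm

lemma runSum_fib_add (hd : ∀ m, IsZeckendorfDigits (d m) m) {k j : ℕ} (hj : j ≤ fib (k + 3)) :
    runSum d (fib (k + 4) + j) = runSum d (fib (k + 4)) + runSum d j := by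
  rw [runSum, sum_range_add]
  congr 1
  exact sum_congr rfl fun t ht => by rw [second_digit_fib_add hd ((mem_range.mp ht).trans_le hj)]

lemma even_runSum_fib (hd : ∀ m, IsZeckendorfDigits (d m) m) (k : ℕ) :
    Even (runSum d (fib (k + 3))) := by
  induction k using Nat.twoStepInduction with
  | zero =>
    change Even (runSum d 2)
    simp [runSum, sum_range_succ, second_digit_of_lt_two hd]
  | one =>
    change Even (runSum d 3)
    simp [runSum, sum_range_succ, second_digit_of_lt_two hd, second_digit_two hd]
  | more k ih ih1 =>
    have hfib : fib (k + 2 + 3) = fib (k + 4) + fib (k + 3) :=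
      (fib_add_two (n := k + 3)).trans (add_comm _ _)
    rw [hfib, runSum_fib_add hd le_rfl]
    exact ih1.add ih

lemma fibWord_eq_runSum_mod_two (hd : ∀ m, IsZeckendorfDigits (d m) m) (m : ℕ) :
    fibWord m = runSum d m % 2 := by
  refine Nat.strong_induction_on m fun m ih => ?_
  rcases lt_or_ge m 3 with hm | hm
  · interval_cases m <;> simp [runSum, sum_range_succ, second_digit_of_lt_two hd] <;> rfl
  obtain ⟨k, j, hj, rfl⟩ := exists_eq_fib_add hm
  obtain ⟨r, hr⟩ := even_runSum_fib hd (k + 1)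
  have hpos : 0 < fib (k + 4) := fib_pos.mpr (by omega)
  rw [fibWord_fib_add hj, runSum_fib_add hd hj.le, hr, ih j (by omega)]
  omega

end SecondDigit

theorem fib_word_eq_runsum_second_digit
    (d : ℕ → ℕ → ℕ)
    (hd1 : ∀ m i, d m i ≤ 1)
    (hd2 : ∀ m i, ¬ (d m i = 1 ∧ d m (i + 1) = 1))
    (hd3 : ∀ m, m = ∑ i ∈ Finset.range (m + 1), d m i * Nat.fib (i + 2))
    (hd4 : ∀ m i, m + 1 ≤ i → d m i = 0)
    (n : ℕ) :
    fibWord (n + 1) = (∑ i ∈ Finset.range (n + 1), (1 - d i 1)) % 2 :=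
  fibWord_eq_runSum_mod_two (fun m => ⟨⟨hd1 m, hd2 m⟩, hd3 m, hd4 m⟩) (n + 1)
end
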